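/- arXiv:2303.09002 — 3 statements merged into one kernel-verified Lean document; each statement's English description precedes it below -/
import Mathlib

section
/- Fix integers n, m, l ≥ 1 and real matrices E ∈ ℝ^{n×n}, F ∈ ℝ^{n×m}, G ∈ ℝ^{n×l}, H ∈ ℝ^{m×n}. Let a = (a_0, …, a_{n−1}) ∈ ℝ^{1×n} be a row vector satisfying E^n = a_0 I_n + a_1 E + ⋯ + a_{n−1} E^{n−1}. Assume the matrix F_x^i ∈ ℝ^{n×n} is invertible for every i ∈ {1,…,m}. Let K_LQG ∈ ℝ^{m×(m+l)n} be the matrix whose i-th row is H_i · [ F_u + E^n (F_x^i)^{−1}(P_i − M_u^i) , F_y − E^n (F_x^i)^{−1} M_y^i ]. Then K_LQG = [ H , I_m ] · L_est, where [H, I_m] ∈ ℝ^{m×(n+m)}. (Data-driven separation principle, Theorem 1.) -/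
open Matrix

noncomputable section

namespace LQGPaper

variable {n m l : ℕ}

/-- Row block matrix `(E^{n-1}B, E^{n-2}B, …, B) ∈ ℝ^{n×nk}`. -/
def Frow {k : ℕ} (E : Matrix (Fin n) (Fin n) ℝ) (B : Matrix (Fin n) (Fin k) ℝ) :
    Matrix (Fin n) (Fin n × Fin k) ℝ :=
  Matrix.of fun i q => (E ^ (n - 1 - (q.1 : ℕ)) * B) i q.2

/-- Strictly block-lower-triangular matrix (`M̃_u`/`M̃_y` style) whose `(i,j)` block
(0-indexed, blocks of size `n × k`) is `E^{i-j-1} B` for `i > j` and `0` otherwise. -/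
def Mlow {k : ℕ} (E : Matrix (Fin n) (Fin n) ℝ) (B : Matrix (Fin n) (Fin k) ℝ) :
    Matrix (Fin n × Fin n) (Fin n × Fin k) ℝ :=
  Matrix.of fun p q =>
    if (q.1 : ℕ) < (p.1 : ℕ) then (E ^ ((p.1 : ℕ) - (q.1 : ℕ) - 1) * B) p.2 q.2 else 0

/-- Strictly block-lower-triangular matrix (`M_u`/`M_y` style) whose `(i,j)` block
(0-indexed, blocks of size `m × k`) is `H E^{i-j-1} B` for `i > j` and `0` otherwise. -/
def MlowH {k : ℕ} (E : Matrix (Fin n) (Fin n) ℝ) (B : Matrix (Fin n) (Fin k) ℝ)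
    (H : Matrix (Fin m) (Fin n) ℝ) :
    Matrix (Fin n × Fin m) (Fin n × Fin k) ℝ :=
  Matrix.of fun p q =>
    if (q.1 : ℕ) < (p.1 : ℕ) then (H * E ^ ((p.1 : ℕ) - (q.1 : ℕ) - 1) * B) p.2 q.2 else 0

/-- The block column `F_x = (H; HE; …; HE^{n-1}) ∈ ℝ^{mn×n}`. -/
def Fx (E : Matrix (Fin n) (Fin n) ℝ) (H : Matrix (Fin m) (Fin n) ℝ) :
    Matrix (Fin n × Fin m) (Fin n) ℝ :=
  Matrix.of fun p j => (H * E ^ (p.1 : ℕ)) p.2 j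

/-- The selection matrix `P_i = I_n ⊗ e_iᵀ ∈ ℝ^{n×nm}`. -/
def Pmat (n : ℕ) {m : ℕ} (i : Fin m) : Matrix (Fin n) (Fin n × Fin m) ℝ :=
  Matrix.of fun r q => if r = q.1 ∧ q.2 = i then 1 else 0

/-- The Kronecker product `a ⊗ I_q ∈ ℝ^{q×nq}` of a row vector `a ∈ ℝ^{1×n}`
with the identity `I_q`. -/
def aKron (a : Fin n → ℝ) (q : ℕ) : Matrix (Fin q) (Fin n × Fin q) ℝ :=
  Matrix.of fun i p => if i = p.2 then a p.1 else 0

/-- The row vector `a ∈ ℝ^{1×n}` as a `1 × n` matrix. -/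
def aRow (a : Fin n → ℝ) : Matrix (Fin 1) (Fin n) ℝ := Matrix.of fun _ k => a k

/-- The `i`-th row of `H` as a `1 × n` matrix. -/
def Hrow (H : Matrix (Fin m) (Fin n) ℝ) (i : Fin m) : Matrix (Fin 1) (Fin n) ℝ :=
  Matrix.of fun _ j => H i j

/-- The estimation matrix
`L_est = [[F_u − (a⊗I_n)M̃_u , F_y − (a⊗I_n)M̃_y]; [a⊗I_m , 0]] ∈ ℝ^{(n+m)×(m+l)n}`. -/
def Lest (E : Matrix (Fin n) (Fin n) ℝ) (F : Matrix (Fin n) (Fin m) ℝ)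
    (G : Matrix (Fin n) (Fin l) ℝ) (a : Fin n → ℝ) :
    Matrix (Fin n ⊕ Fin m) ((Fin n × Fin m) ⊕ (Fin n × Fin l)) ℝ :=
  Matrix.fromBlocks (Frow E F - aKron a n * Mlow E F) (Frow E G - aKron a n * Mlow E G)
    (aKron a m) 0

/-- A compensator trajectory: `x̂(t+1) = E x̂(t) + F u(t) + G y(t+1)`, `u(t) = H x̂(t)`. -/
def IsCompTraj (E : Matrix (Fin n) (Fin n) ℝ) (F : Matrix (Fin n) (Fin m) ℝ)
    (G : Matrix (Fin n) (Fin l) ℝ) (H : Matrix (Fin m) (Fin n) ℝ)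
    (xh : ℕ → Fin n → ℝ) (u : ℕ → Fin m → ℝ) (y : ℕ → Fin l → ℝ) : Prop :=
  (∀ t, xh (t + 1) = E.mulVec (xh t) + F.mulVec (u t) + G.mulVec (y (t + 1))) ∧
    ∀ t, u t = H.mulVec (xh t)

/-- The stacked vector `(v(t); v(t+1); …; v(t+r-1))`. -/
def stack {k : ℕ} (v : ℕ → Fin k → ℝ) (r t : ℕ) : Fin r × Fin k → ℝ :=
  fun p => v (t + (p.1 : ℕ)) p.2


lemma Pmat_mul_apply {α : Type*} [Fintype α] (i : Fin m) (X : Matrix (Fin n × Fin m) α ℝ)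
    (r : Fin n) (q : α) : (Pmat n i * X) r q = X (r, i) q := by
  rw [Matrix.mul_apply, Fintype.sum_prod_type]
  simp [Pmat, ite_and]

lemma aKron_mul_apply {α : Type*} [Fintype α] {q' : ℕ} (a : Fin n → ℝ)
    (X : Matrix (Fin n × Fin q') α ℝ) (p : Fin q') (j : α) :
    (aKron a q' * X) p j = ∑ r, a r * X (r, p) j := by
  rw [Matrix.mul_apply, Fintype.sum_prod_type]
  simp [aKron]

lemma Hrow_mul_apply {α : Type*} [Fintype α] (H : Matrix (Fin m) (Fin n) ℝ) (i : Fin m)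
    (X : Matrix (Fin n) α ℝ) (r : Fin 1) (q : α) :
    (Hrow H i * X) r q = (H * X) i q := by
  simp [Matrix.mul_apply, Hrow]

lemma aRow_mul_apply {α : Type*} [Fintype α] (a : Fin n → ℝ)
    (X : Matrix (Fin n) α ℝ) (r : Fin 1) (q : α) :
    (aRow a * X) r q = ∑ k, a k * X k q := by
  simp [Matrix.mul_apply, aRow]

lemma aRow_mul_Pmat (a : Fin n → ℝ) (i : Fin m) (r : Fin 1) (q : Fin n × Fin m) :
    (aRow a * Pmat n i) r q = aKron a m i q := by
  rw [aRow_mul_apply]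
  rcases eq_or_ne q.2 i with h | h
  · simp [Pmat, aKron, h.symm, ite_and, ← h]
  · simp [Pmat, aKron, h, Ne.symm h, ite_and]

lemma aRow_Pmat_MlowH {k : ℕ} (E : Matrix (Fin n) (Fin n) ℝ) (B : Matrix (Fin n) (Fin k) ℝ)
    (H : Matrix (Fin m) (Fin n) ℝ) (a : Fin n → ℝ) (i : Fin m) (r : Fin 1)
    (q : Fin n × Fin k) :
    (aRow a * (Pmat n i * MlowH E B H)) r q = (H * (aKron a n * Mlow E B)) i q := by
  rw [aRow_mul_apply]
  calc (∑ s, a s * (Pmat n i * MlowH E B H) s q)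
      = ∑ s, a s * ∑ p, H i p * Mlow E B (s, p) q := by
        refine Finset.sum_congr rfl fun s _ => ?_
        rw [Pmat_mul_apply]
        congr 1
        by_cases h : (q.1 : ℕ) < (s : ℕ)
        · simp only [MlowH, Mlow, Matrix.of_apply, if_pos h]
          rw [Matrix.mul_assoc, Matrix.mul_apply]
        · simp only [MlowH, Mlow, Matrix.of_apply, if_neg h, mul_zero,
            Finset.sum_const_zero]
    _ = (H * (aKron a n * Mlow E B)) i q := by
        rw [Matrix.mul_apply]
        simp only [aKron_mul_apply, Finset.mul_sum]
        rw [Finset.sum_comm]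
        exact Finset.sum_congr rfl fun s _ => Finset.sum_congr rfl fun p _ => by ring

/-- data-driven separation principle, Theorem 1. -/
theorem data_driven_separation (n m l : ℕ) (hn : 1 ≤ n) (hm : 1 ≤ m) (hl : 1 ≤ l)
    (E : Matrix (Fin n) (Fin n) ℝ) (F : Matrix (Fin n) (Fin m) ℝ)
    (G : Matrix (Fin n) (Fin l) ℝ) (H : Matrix (Fin m) (Fin n) ℝ)
    (a : Fin n → ℝ) (ha : E ^ n = ∑ k : Fin n, a k • E ^ (k : ℕ))
    (hFxi : ∀ i : Fin m, IsUnit (Pmat n i * Fx E H))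
    (KLQG : Matrix (Fin m) ((Fin n × Fin m) ⊕ (Fin n × Fin l)) ℝ)
    (hK : ∀ (i : Fin m) (j : (Fin n × Fin m) ⊕ (Fin n × Fin l)),
      KLQG i j =
        (Hrow H i *
          Matrix.fromCols
            (Frow E F +
              E ^ n * (Pmat n i * Fx E H)⁻¹ * (Pmat n i - Pmat n i * MlowH E F H))
            (Frow E G - E ^ n * (Pmat n i * Fx E H)⁻¹ * (Pmat n i * MlowH E G H)))
          0 j) :
    KLQG = Matrix.fromCols H (1 : Matrix (Fin m) (Fin m) ℝ) * Lest E F G a := by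
  ext i j
  rw [hK]
  have hdet : IsUnit (Pmat n i * Fx E H).det :=
    (Matrix.isUnit_iff_isUnit_det _).mp (hFxi i)
  have h1 : aRow a * (Pmat n i * Fx E H) = Hrow H i * E ^ n := by
    ext r j
    rw [Hrow_mul_apply, ha, Matrix.mul_sum]
    simp only [Matrix.mul_smul, Matrix.sum_apply, Matrix.smul_apply, smul_eq_mul]
    rw [aRow_mul_apply]
    refine Finset.sum_congr rfl fun k _ => ?_
    rw [Pmat_mul_apply]
    simp [Fx]
  have key : Hrow H i * E ^ n * (Pmat n i * Fx E H)⁻¹ = aRow a := by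
    rw [← h1, Matrix.mul_nonsing_inv_cancel_right _ _ hdet]
  rw [Matrix.mul_fromCols, Lest, Matrix.fromCols_mul_fromBlocks]
  have h3 : ∀ {k : ℕ} (Z : Matrix (Fin n) (Fin n × Fin k) ℝ),
      Hrow H i * (E ^ n * (Pmat n i * Fx E H)⁻¹ * Z) = aRow a * Z := by
    intro k Z
    rw [← Matrix.mul_assoc, ← Matrix.mul_assoc, key]
  cases j with
  | inl q =>
      rw [Matrix.fromCols_apply_inl, Matrix.fromCols_apply_inl,
        Matrix.mul_add, h3, Matrix.mul_sub, Matrix.mul_sub]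
      simp only [Matrix.add_apply, Matrix.sub_apply, Hrow_mul_apply,
        aRow_mul_Pmat, aRow_Pmat_MlowH, Matrix.one_mul]
      ring
  | inr q =>
      rw [Matrix.fromCols_apply_inr, Matrix.fromCols_apply_inr,
        Matrix.mul_sub, h3, Matrix.mul_sub]
      simp only [Matrix.sub_apply, Hrow_mul_apply, aRow_Pmat_MlowH,
        Matrix.mul_zero, Matrix.add_apply, Matrix.zero_apply, add_zero]


end LQGPaper
end
end

section
/- Fix integers n, m, l, r, c ≥ 1, let E ∈ ℝ^{n×n}, F ∈ ℝ^{n×m}, G ∈ ℝ^{n×l}, H ∈ ℝ^{m×n}, and let (x̂, u, y) be a compensator trajectory. Then for every t ≥ 0 the input-output data matrix satisfies the rank bound rank(H_{r,c}(t)) ≤ min{ (m+l)r , c , n + lr }. (Upper-bound part of Lemma 1.) -/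
open Matrix

noncomputable section

namespace LQGPaper

variable {n m l : ℕ}

/-- The block column `F̄_x = (H; HĒ; …; HĒ^{r-1}) ∈ ℝ^{mr×n}`. -/
def ObsMat {n m : ℕ} (r : ℕ) (Eb : Matrix (Fin n) (Fin n) ℝ)
    (H : Matrix (Fin m) (Fin n) ℝ) : Matrix (Fin r × Fin m) (Fin n) ℝ :=
  Matrix.of fun p j => (H * Eb ^ (p.1 : ℕ)) p.2 j

/-- `F̄_y ∈ ℝ^{mr×lr}`: block matrix whose `(i,j)` block (0-indexed, blocks `m × l`)
is `H Ē^{i-j-1} G` for `i > j` and `0` otherwise. -/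
def ToepMat {n m l : ℕ} (r : ℕ) (Eb : Matrix (Fin n) (Fin n) ℝ)
    (G : Matrix (Fin n) (Fin l) ℝ) (H : Matrix (Fin m) (Fin n) ℝ) :
    Matrix (Fin r × Fin m) (Fin r × Fin l) ℝ :=
  Matrix.of fun p q =>
    if (q.1 : ℕ) < (p.1 : ℕ) then
      (H * Eb ^ ((p.1 : ℕ) - (q.1 : ℕ) - 1) * G) p.2 q.2
    else 0

/-- The input-output data matrix `H_{r,c}(t)` whose `k`-th column is
`(U_r(t+k); Y_r(t+k+1))`. -/
def dataMat {m l : ℕ} (u : ℕ → Fin m → ℝ) (y : ℕ → Fin l → ℝ) (r c t : ℕ) :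
    Matrix ((Fin r × Fin m) ⊕ (Fin r × Fin l)) (Fin c) ℝ :=
  Matrix.of fun i k =>
    Sum.elim (fun p : Fin r × Fin m => u (t + (k : ℕ) + (p.1 : ℕ)) p.2)
      (fun p : Fin r × Fin l => y (t + (k : ℕ) + 1 + (p.1 : ℕ)) p.2) i

/-- The matrix `N` whose `k`-th column is `(x̂(t+k); Y_r(t+k+1))`. -/
def stateMat {n l : ℕ} (xh : ℕ → Fin n → ℝ) (y : ℕ → Fin l → ℝ) (r c t : ℕ) :
    Matrix (Fin n ⊕ (Fin r × Fin l)) (Fin c) ℝ :=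
  Matrix.of fun i k =>
    Sum.elim (fun j : Fin n => xh (t + (k : ℕ)) j)
      (fun p : Fin r × Fin l => y (t + (k : ℕ) + 1 + (p.1 : ℕ)) p.2) i

/-!
Along a compensator trajectory the state obeys the closed-loop recursion
`x̂(t+1) = (E + F H) x̂(t) + G y(t+1)`, so every stacked input is determined by the current state
and the future outputs: `U_r(t) = F̄_x x̂(t) + F̄_y Y_r(t+1)`. Hence
`H_{r,c}(t) = [[F̄_x, F̄_y], [0, I]] N` with `N` the `(n + lr) × c` matrix of columns
`(x̂(t+k); Y_r(t+k+1))`, which gives the bound `n + lr`; the other two are the dimensions of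
`H_{r,c}(t)`.
-/

theorem _root_.Fin.sum_ite_lt_eq_sum_range {M : Type*} [AddCommMonoid M] {r i : ℕ} (hi : i ≤ r)
    (g : ℕ → M) :
    ∑ j : Fin r, (if (j : ℕ) < i then g j else 0) = ∑ j ∈ Finset.range i, g j := by
  rw [Fin.sum_univ_eq_sum_range (fun j => if j < i then g j else 0), ← Finset.sum_filter]
  congr 1
  ext j
  simp only [Finset.mem_filter, Finset.mem_range]
  omega

theorem _root_.Matrix.eq_pow_mulVec_add_sum_of_succ_eq {ι R : Type*} [Fintype ι] [DecidableEq ι]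
    [Semiring R] {A : Matrix ι ι R} {x w : ℕ → ι → R} (h : ∀ t, x (t + 1) = A *ᵥ x t + w t)
    (s i : ℕ) :
    x (s + i) = A ^ i *ᵥ x s + ∑ j ∈ Finset.range i, A ^ (i - j - 1) *ᵥ w (s + j) := by
  induction i with
  | zero => simp
  | succ i ih =>
    have hpow : ∀ j ∈ Finset.range i, A *ᵥ (A ^ (i - j - 1) *ᵥ w (s + j)) =
        A ^ (i + 1 - j - 1) *ᵥ w (s + j) := by
      intro j hj
      rw [Finset.mem_range] at hj
      rw [mulVec_mulVec, ← pow_succ', show i + 1 - j - 1 = i - j - 1 + 1 by omega]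
    rw [← add_assoc, h, ih, mulVec_add, mulVec_mulVec, ← pow_succ', mulVec_sum,
      Finset.sum_range_succ, add_assoc, Finset.sum_congr rfl hpow]
    simp

theorem obsMat_mulVec_apply (r : ℕ) (Eb : Matrix (Fin n) (Fin n) ℝ) (H : Matrix (Fin m) (Fin n) ℝ)
    (x : Fin n → ℝ) (p : Fin r × Fin m) :
    (ObsMat r Eb H *ᵥ x) p = ((H * Eb ^ (p.1 : ℕ)) *ᵥ x) p.2 :=
  rfl

theorem toepMat_mulVec_stack_apply (r : ℕ) (Eb : Matrix (Fin n) (Fin n) ℝ)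
    (G : Matrix (Fin n) (Fin l) ℝ) (H : Matrix (Fin m) (Fin n) ℝ) (v : ℕ → Fin l → ℝ) (s : ℕ)
    (p : Fin r × Fin m) :
    (ToepMat r Eb G H *ᵥ stack v r s) p =
      ∑ j ∈ Finset.range (p.1 : ℕ), ((H * Eb ^ ((p.1 : ℕ) - j - 1) * G) *ᵥ v (s + j)) p.2 := by
  simp only [mulVec, dotProduct, Fintype.sum_prod_type, ToepMat, stack, of_apply, ite_mul,
    zero_mul, Finset.sum_ite_irrel, Finset.sum_const_zero]
  exact Fin.sum_ite_lt_eq_sum_range p.1.isLt.le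
    fun j => ∑ b, (H * Eb ^ ((p.1 : ℕ) - j - 1) * G) p.2 b * v (s + j) b

namespace IsCompTraj

variable {E : Matrix (Fin n) (Fin n) ℝ} {F : Matrix (Fin n) (Fin m) ℝ}
  {G : Matrix (Fin n) (Fin l) ℝ} {H : Matrix (Fin m) (Fin n) ℝ}
  {xh : ℕ → Fin n → ℝ} {u : ℕ → Fin m → ℝ} {y : ℕ → Fin l → ℝ}

theorem xh_succ (htraj : IsCompTraj E F G H xh u y) (t : ℕ) :
    xh (t + 1) = (E + F * H) *ᵥ xh t + G *ᵥ y (t + 1) := by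
  rw [htraj.1, htraj.2, mulVec_mulVec, add_mulVec]

theorem stack_input_eq (htraj : IsCompTraj E F G H xh u y) (r s : ℕ) :
    stack u r s =
      ObsMat r (E + F * H) H *ᵥ xh s + ToepMat r (E + F * H) G H *ᵥ stack y r (s + 1) := by
  funext p
  rw [Pi.add_apply, obsMat_mulVec_apply, toepMat_mulVec_stack_apply, stack, htraj.2,
    Matrix.eq_pow_mulVec_add_sum_of_succ_eq htraj.xh_succ]
  simp only [mulVec_add, mulVec_sum, mulVec_mulVec, Matrix.mul_assoc, Pi.add_apply,
    Finset.sum_apply, add_right_comm s _ 1]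

theorem dataMat_eq_mul_stateMat (htraj : IsCompTraj E F G H xh u y) (r c t : ℕ) :
    dataMat u y r c t =
      fromBlocks (ObsMat r (E + F * H) H) (ToepMat r (E + F * H) G H) 0 1 *
        stateMat xh y r c t := by
  ext i k
  have hinl : (fun j => stateMat xh y r c t j k) ∘ Sum.inl = xh (t + k) := rfl
  have hinr : (fun j => stateMat xh y r c t j k) ∘ Sum.inr = stack y r (t + k + 1) := rfl
  change _ = (fromBlocks _ _ _ _ *ᵥ fun j => stateMat xh y r c t j k) i
  rw [fromBlocks_mulVec, hinl, hinr, ← htraj.stack_input_eq]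
  rcases i with p | p
  · rfl
  · simp [dataMat, stack]

end IsCompTraj

theorem data_matrix_rank_le_general (n m l r c : ℕ)
    (E : Matrix (Fin n) (Fin n) ℝ) (F : Matrix (Fin n) (Fin m) ℝ)
    (G : Matrix (Fin n) (Fin l) ℝ) (H : Matrix (Fin m) (Fin n) ℝ)
    (xh : ℕ → Fin n → ℝ) (u : ℕ → Fin m → ℝ) (y : ℕ → Fin l → ℝ)
    (htraj : IsCompTraj E F G H xh u y) (t : ℕ) :
    (dataMat u y r c t).rank ≤ min ((m + l) * r) (min c (n + l * r)) := by
  refine le_min ?_ (le_min ?_ ?_)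
  · calc (dataMat u y r c t).rank ≤ Fintype.card ((Fin r × Fin m) ⊕ (Fin r × Fin l)) :=
        rank_le_card_height _
      _ = (m + l) * r := by
        simp only [Fintype.card_sum, Fintype.card_prod, Fintype.card_fin]; ring
  · calc (dataMat u y r c t).rank ≤ Fintype.card (Fin c) := rank_le_card_width _
      _ = c := Fintype.card_fin c
  · rw [htraj.dataMat_eq_mul_stateMat]
    calc (_ * stateMat xh y r c t).rank ≤ (stateMat xh y r c t).rank := rank_mul_le_right _ _
      _ ≤ Fintype.card (Fin n ⊕ (Fin r × Fin l)) := rank_le_card_height _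
      _ = n + l * r := by
        simp only [Fintype.card_sum, Fintype.card_prod, Fintype.card_fin]; ring

/-- rank upper bound part of Lemma 1. -/
theorem data_matrix_rank_le (n m l r c : ℕ)
    (hn : 1 ≤ n) (hm : 1 ≤ m) (hl : 1 ≤ l) (hr : 1 ≤ r) (hc : 1 ≤ c)
    (E : Matrix (Fin n) (Fin n) ℝ) (F : Matrix (Fin n) (Fin m) ℝ)
    (G : Matrix (Fin n) (Fin l) ℝ) (H : Matrix (Fin m) (Fin n) ℝ)
    (xh : ℕ → Fin n → ℝ) (u : ℕ → Fin m → ℝ) (y : ℕ → Fin l → ℝ)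
    (htraj : IsCompTraj E F G H xh u y) (t : ℕ) :
    (dataMat u y r c t).rank ≤ min ((m + l) * r) (min c (n + l * r)) :=
  data_matrix_rank_le_general n m l r c E F G H xh u y htraj t

end LQGPaper
end
end

section
/- Fix integers n, m, l ≥ 1, let E ∈ ℝ^{n×n}, F ∈ ℝ^{n×m}, G ∈ ℝ^{n×l}, H ∈ ℝ^{m×n}, and let (x̂, u, y) be a compensator trajectory. Fix i ∈ {1,…,m} and assume F_x^i ∈ ℝ^{n×n} is invertible. Then for every t ≥ 0 the i-th input component satisfies u_i(t+n) = H_i · [ F_u + E^n (F_x^i)^{−1}(P_i − M_u^i) , F_y − E^n (F_x^i)^{−1} M_y^i ] · (U_n(t) ; Y_n(t+1)), where u_i(t+n) denotes the i-th entry of u(t+n) and (U_n(t) ; Y_n(t+1)) ∈ ℝ^{(m+l)n} is the stacked vector. (Lemma 2 in the Appendix: alternative expression for the static LQG gain.) -/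
open Matrix

noncomputable section

namespace LQGPaper

variable {n m l : ℕ}

/- ---- auxiliary lemmas ---- -/

lemma mulVec_sum' {ι : Type*} {k k' : ℕ} (A : Matrix (Fin k) (Fin k') ℝ) (s : Finset ι)
    (f : ι → Fin k' → ℝ) :
    A.mulVec (∑ j ∈ s, f j) = ∑ j ∈ s, A.mulVec (f j) := by
  funext x
  simp only [Matrix.mulVec, dotProduct, Finset.sum_apply, Finset.mul_sum]
  exact Finset.sum_comm

lemma Hterm {k k' : ℕ} (H : Matrix (Fin m) (Fin n) ℝ) (Ek : Matrix (Fin n) (Fin n) ℝ)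
    (F : Matrix (Fin n) (Fin k) ℝ) (G : Matrix (Fin n) (Fin k') ℝ)
    (a : Fin k → ℝ) (b : Fin k' → ℝ) :
    H.mulVec (Ek.mulVec (F.mulVec a + G.mulVec b)) =
      (H * Ek * F).mulVec a + (H * Ek * G).mulVec b := by
  simp only [Matrix.mulVec_add, Matrix.mulVec_mulVec, Matrix.mul_assoc]

lemma xh_sol {E : Matrix (Fin n) (Fin n) ℝ} {F : Matrix (Fin n) (Fin m) ℝ}
    {G : Matrix (Fin n) (Fin l) ℝ} {H : Matrix (Fin m) (Fin n) ℝ}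
    {xh : ℕ → Fin n → ℝ} {u : ℕ → Fin m → ℝ} {y : ℕ → Fin l → ℝ}
    (h : IsCompTraj E F G H xh u y) (t k : ℕ) :
    xh (t + k) = (E ^ k).mulVec (xh t) +
      ∑ j ∈ Finset.range k,
        (E ^ (k - 1 - j)).mulVec (F.mulVec (u (t + j)) + G.mulVec (y (t + j + 1))) := by
  induction k with
  | zero => simp [Matrix.one_mulVec]
  | succ k ih =>
    have hterm : ∀ j ∈ Finset.range k,
        E.mulVec ((E ^ (k - 1 - j)).mulVec (F.mulVec (u (t + j)) + G.mulVec (y (t + j + 1))))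
          = (E ^ (k + 1 - 1 - j)).mulVec (F.mulVec (u (t + j)) + G.mulVec (y (t + j + 1))) := by
      intro j hj
      have he : k - 1 - j + 1 = k + 1 - 1 - j := by
        have := Finset.mem_range.mp hj; omega
      rw [Matrix.mulVec_mulVec, ← pow_succ', he]
    have h1 := h.1 (t + k)
    rw [show t + (k + 1) = t + k + 1 by ring, h1, ih, Matrix.mulVec_add,
      Matrix.mulVec_mulVec, ← pow_succ', mulVec_sum', Finset.sum_congr rfl hterm,
      Finset.sum_range_succ]
    have hk0 : k + 1 - 1 - k = 0 := by omega
    rw [hk0, pow_zero, Matrix.one_mulVec]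
    abel

lemma sum_range_eq_fin (r : ℕ) (hr : r ≤ n) (f : ℕ → ℝ) :
    ∑ j ∈ Finset.range r, f j = ∑ q : Fin n, if (q : ℕ) < r then f q else 0 := by
  rw [Fin.sum_univ_eq_sum_range (fun j => if j < r then f j else 0) n]
  rw [← Finset.sum_subset (Finset.range_subset_range.mpr hr)
      (fun x _ hx => by simp [Finset.mem_range.not.mp hx])]
  exact Finset.sum_congr rfl fun x hx => by simp [Finset.mem_range.mp hx]

lemma Pmat_mulVec (i : Fin m) (v : Fin n × Fin m → ℝ) :
    (Pmat n i).mulVec v = fun r => v (r, i) := by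
  funext r
  simp only [Pmat, Matrix.mulVec, dotProduct, Matrix.of_apply,
    Fintype.sum_prod_type, boole_mul]
  rw [Finset.sum_eq_single r]
  · simp
  · intro b _ hb
    apply Finset.sum_eq_zero
    intro c _
    simp [Ne.symm hb]
  · simp

lemma Frow_mulVec {k : ℕ} (E : Matrix (Fin n) (Fin n) ℝ) (B : Matrix (Fin n) (Fin k) ℝ)
    (v : ℕ → Fin k → ℝ) (t : ℕ) :
    (Frow E B).mulVec (stack v n t) =
      ∑ q : Fin n, (E ^ (n - 1 - (q : ℕ))).mulVec (B.mulVec (v (t + (q : ℕ)))) := by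
  funext j
  simp only [Frow, Matrix.mulVec, dotProduct, Matrix.of_apply, Fintype.sum_prod_type,
    stack, Finset.sum_apply, Matrix.mul_apply, Finset.sum_mul, Finset.mul_sum]
  apply Finset.sum_congr rfl
  intro q _
  rw [Finset.sum_comm]
  apply Finset.sum_congr rfl
  intro c _
  apply Finset.sum_congr rfl
  intro d _
  ring

lemma MlowH_mulVec {k : ℕ} (E : Matrix (Fin n) (Fin n) ℝ) (B : Matrix (Fin n) (Fin k) ℝ)
    (H : Matrix (Fin m) (Fin n) ℝ) (v : ℕ → Fin k → ℝ) (t : ℕ) (r : Fin n) (s : Fin m) :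
    (MlowH E B H).mulVec (stack v n t) (r, s) =
      ∑ q : Fin n, if (q : ℕ) < (r : ℕ) then
        ((H * E ^ ((r : ℕ) - (q : ℕ) - 1) * B).mulVec (v (t + (q : ℕ)))) s else 0 := by
  simp only [MlowH, Matrix.mulVec, dotProduct, Matrix.of_apply, Fintype.sum_prod_type,
    stack]
  apply Finset.sum_congr rfl
  intro q _
  by_cases h : (q : ℕ) < (r : ℕ)
  · simp [h]
  · simp [h]

lemma Fx_mulVec (E : Matrix (Fin n) (Fin n) ℝ) (H : Matrix (Fin m) (Fin n) ℝ)
    (w : Fin n → ℝ) (r : Fin n) (s : Fin m) :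
    (Fx E H).mulVec w (r, s) = ((H * E ^ (r : ℕ)).mulVec w) s := rfl

/-- Lemma 2: alternative expression for the static LQG gain,
row-wise. -/
theorem static_gain_rowwise (n m l : ℕ) (hn : 1 ≤ n) (hm : 1 ≤ m) (hl : 1 ≤ l)
    (E : Matrix (Fin n) (Fin n) ℝ) (F : Matrix (Fin n) (Fin m) ℝ)
    (G : Matrix (Fin n) (Fin l) ℝ) (H : Matrix (Fin m) (Fin n) ℝ)
    (xh : ℕ → Fin n → ℝ) (u : ℕ → Fin m → ℝ) (y : ℕ → Fin l → ℝ)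
    (htraj : IsCompTraj E F G H xh u y)
    (i : Fin m) (hFxi : IsUnit (Pmat n i * Fx E H)) (t : ℕ) :
    u (t + n) i =
      (Hrow H i *
        Matrix.fromCols
          (Frow E F +
            E ^ n * (Pmat n i * Fx E H)⁻¹ * (Pmat n i - Pmat n i * MlowH E F H))
          (Frow E G - E ^ n * (Pmat n i * Fx E H)⁻¹ * (Pmat n i * MlowH E G H))).mulVec
        (Sum.elim (stack u n t) (stack y n (t + 1))) 0 := by
  set U : Fin n × Fin m → ℝ := stack u n t with hU
  set Y : Fin n × Fin l → ℝ := stack y n (t + 1) with hY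
  set P : Matrix (Fin n) (Fin n × Fin m) ℝ := Pmat n i with hP
  set A : Matrix (Fin n) (Fin n) ℝ := Pmat n i * Fx E H with hA
  set Mu : Matrix (Fin n × Fin m) (Fin n × Fin m) ℝ := MlowH E F H with hMu
  set My : Matrix (Fin n × Fin m) (Fin n × Fin l) ℝ := MlowH E G H with hMy
  -- key 1 : state propagation over n steps
  have key1 : xh (t + n) = (E ^ n).mulVec (xh t) + (Frow E F).mulVec U + (Frow E G).mulVec Y := by
    rw [xh_sol htraj t n]
    have hs : ∑ j ∈ Finset.range n,
        (E ^ (n - 1 - j)).mulVec (F.mulVec (u (t + j)) + G.mulVec (y (t + j + 1)))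
        = (Frow E F).mulVec U + (Frow E G).mulVec Y := by
      rw [hU, hY, Frow_mulVec, Frow_mulVec, Fin.sum_univ_eq_sum_range
        (fun j => (E ^ (n - 1 - j)).mulVec (F.mulVec (u (t + j)))) n,
        Fin.sum_univ_eq_sum_range
        (fun j => (E ^ (n - 1 - j)).mulVec (G.mulVec (y (t + 1 + j)))) n,
        ← Finset.sum_add_distrib]
      apply Finset.sum_congr rfl
      intro j _
      rw [Matrix.mulVec_add, show t + 1 + j = t + j + 1 by ring]
    rw [hs, add_assoc]
  -- key 2 : expressing A x̂(t) in terms of U, Y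
  have key2 : A.mulVec (xh t) = P.mulVec U - (P * Mu).mulVec U - (P * My).mulVec Y := by
    funext r
    have hr : (r : ℕ) ≤ n := le_of_lt r.isLt
    have hAv : A.mulVec (xh t) r = ((H * E ^ (r : ℕ)).mulVec (xh t)) i := by
      rw [hA, ← Matrix.mulVec_mulVec, Pmat_mulVec]
      rfl
    have hPU : P.mulVec U r = u (t + (r : ℕ)) i := by
      rw [hP, Pmat_mulVec]
      rfl
    have hPMu : (P * Mu).mulVec U r = ∑ q : Fin n, if (q : ℕ) < (r : ℕ) then
        ((H * E ^ ((r : ℕ) - (q : ℕ) - 1) * F).mulVec (u (t + (q : ℕ)))) i else 0 := by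
      rw [hP, ← Matrix.mulVec_mulVec, Pmat_mulVec]
      exact MlowH_mulVec E F H u t r i
    have hPMy : (P * My).mulVec Y r = ∑ q : Fin n, if (q : ℕ) < (r : ℕ) then
        ((H * E ^ ((r : ℕ) - (q : ℕ) - 1) * G).mulVec (y (t + 1 + (q : ℕ)))) i else 0 := by
      rw [hP, ← Matrix.mulVec_mulVec, Pmat_mulVec]
      exact MlowH_mulVec E G H y (t + 1) r i
    -- expand u (t + r) i
    have hur : u (t + (r : ℕ)) = (H * E ^ (r : ℕ)).mulVec (xh t)
        + ∑ j ∈ Finset.range (r : ℕ),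
          ((H * E ^ ((r : ℕ) - 1 - j) * F).mulVec (u (t + j))
            + (H * E ^ ((r : ℕ) - 1 - j) * G).mulVec (y (t + j + 1))) := by
      rw [htraj.2 (t + (r : ℕ)), xh_sol htraj t (r : ℕ), Matrix.mulVec_add, mulVec_sum',
        Matrix.mulVec_mulVec]
      congr 1
      exact Finset.sum_congr rfl fun j _ => Hterm H (E ^ ((r : ℕ) - 1 - j)) F G _ _
    have hur_i : u (t + (r : ℕ)) i = ((H * E ^ (r : ℕ)).mulVec (xh t)) i
        + (∑ q : Fin n, if (q : ℕ) < (r : ℕ) then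
            ((H * E ^ ((r : ℕ) - (q : ℕ) - 1) * F).mulVec (u (t + (q : ℕ)))) i else 0)
        + (∑ q : Fin n, if (q : ℕ) < (r : ℕ) then
            ((H * E ^ ((r : ℕ) - (q : ℕ) - 1) * G).mulVec (y (t + 1 + (q : ℕ)))) i else 0) := by
      have h1 := congrFun hur i
      rw [Pi.add_apply, Finset.sum_apply] at h1
      simp only [Pi.add_apply] at h1
      rw [h1, Finset.sum_add_distrib, add_assoc]
      congr 1
      congr 1
      · rw [sum_range_eq_fin (r : ℕ) hr
          (fun j => ((H * E ^ ((r : ℕ) - 1 - j) * F).mulVec (u (t + j))) i)]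
        apply Finset.sum_congr rfl
        intro q _
        by_cases hq : (q : ℕ) < (r : ℕ)
        · simp only [hq, if_true]
          rw [show (r : ℕ) - 1 - (q : ℕ) = (r : ℕ) - (q : ℕ) - 1 by omega]
        · simp [hq]
      · rw [sum_range_eq_fin (r : ℕ) hr
          (fun j => ((H * E ^ ((r : ℕ) - 1 - j) * G).mulVec (y (t + j + 1))) i)]
        apply Finset.sum_congr rfl
        intro q _
        by_cases hq : (q : ℕ) < (r : ℕ)
        · simp only [hq, if_true]
          rw [show (r : ℕ) - 1 - (q : ℕ) = (r : ℕ) - (q : ℕ) - 1 by omega,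
            show t + (q : ℕ) + 1 = t + 1 + (q : ℕ) by ring]
        · simp [hq]
    simp only [Pi.sub_apply]
    rw [hAv, hPU, hPMu, hPMy, hur_i]
    ring
  -- key 3 : recover x̂(t)
  have hdet : IsUnit A.det := (Matrix.isUnit_iff_isUnit_det A).mp hFxi
  have key3 : xh t = (A⁻¹).mulVec (P.mulVec U - (P * Mu).mulVec U - (P * My).mulVec Y) := by
    rw [← key2, Matrix.mulVec_mulVec, Matrix.nonsing_inv_mul A hdet, Matrix.one_mulVec]
  -- final assembly
  have hvec : xh (t + n) =
      (Matrix.fromCols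
          (Frow E F + E ^ n * A⁻¹ * (P - P * Mu))
          (Frow E G - E ^ n * A⁻¹ * (P * My))).mulVec (Sum.elim U Y) := by
    rw [Matrix.fromCols_mulVec_sumElim, key1, key3]
    simp only [Matrix.add_mulVec, Matrix.sub_mulVec, Matrix.mulVec_sub,
      ← Matrix.mulVec_mulVec]
    abel
  have hL : u (t + n) i = (H.mulVec (xh (t + n))) i := by rw [htraj.2 (t + n)]
  rw [hL, hvec, ← Matrix.mulVec_mulVec]
  rfl


end LQGPaper
end
end
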